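/- Let ζ be the two-qubit state (1/4)(I⊗I + a·σ⊗I + I⊗b·σ + Σ_i c_i σ_i⊗σ_i). If Alice measures projectively along directions û_0 = x̂ and û_1 = ŷ and Bob measures along T_0 = x̂ and T_1 = ŷ, then the witness Q equals |(c_1 − a_1 b_1)(c_2 − a_2 b_2) − a_1 b_1 a_2 b_2| / ((1 − a_1²)(1 − a_2²)), assuming |a_1| < 1 and |a_2| < 1. -/

import Mathlib

open Matrix Kronecker

/-- The Pauli matrices σ₁ = σ_x, σ₂ = σ_y, σ₃ = σ_z. -/
noncomputable def pauli : Fin 3 → Matrix (Fin 2) (Fin 2) ℂ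
  | 0 => !![0, 1; 1, 0]
  | 1 => !![0, -Complex.I; Complex.I, 0]
  | 2 => !![1, 0; 0, -1]

/-- v·σ for a real vector v. -/
noncomputable def blochOp (v : Fin 3 → ℝ) : Matrix (Fin 2) (Fin 2) ℂ :=
  ∑ i, (v i : ℂ) • pauli i

/-- The canonical two-qubit state
    ζ = (1/4)(I⊗I + a·σ⊗I + I⊗b·σ + Σᵢ cᵢ σᵢ⊗σᵢ). -/
noncomputable def zeta (a b c : Fin 3 → ℝ) : Matrix (Fin 2 × Fin 2) (Fin 2 × Fin 2) ℂ :=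
  (1/4 : ℂ) • ((1 : Matrix (Fin 2) (Fin 2) ℂ) ⊗ₖ (1 : Matrix (Fin 2) (Fin 2) ℂ)
    + blochOp a ⊗ₖ (1 : Matrix (Fin 2) (Fin 2) ℂ)
    + (1 : Matrix (Fin 2) (Fin 2) ℂ) ⊗ₖ blochOp b
    + ∑ i, (c i : ℂ) • (pauli i ⊗ₖ pauli i))

/-- Alice's projective measurement operators M_{x1|x0} = (I + (−1)^{x1} û_{x0}·σ)/2. -/
noncomputable def measOp (u : Fin 2 → Fin 3 → ℝ) (x0 x1 : Fin 2) :
    Matrix (Fin 2) (Fin 2) ℂ :=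
  (1/2 : ℂ) • ((1 : Matrix (Fin 2) (Fin 2) ℂ) + ((-1 : ℂ) ^ (x1 : ℕ)) • blochOp (u x0))

/-- Conditional probability p(b|x1;x0,y) = Tr((M_{x1|x0}⊗M_{b|y})ζ)/Tr((M_{x1|x0}⊗I)ζ). -/
noncomputable def pcond (ρ : Matrix (Fin 2 × Fin 2) (Fin 2 × Fin 2) ℂ)
    (u T : Fin 2 → Fin 3 → ℝ) (b x1 x0 y : Fin 2) : ℝ :=
  (Matrix.trace ((measOp u x0 x1 ⊗ₖ measOp T y b) * ρ)).re /
    (Matrix.trace ((measOp u x0 x1 ⊗ₖ (1 : Matrix (Fin 2) (Fin 2) ℂ)) * ρ)).re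

/-- The witness Q = |det M| with M_{y,x0} = p(0|0;x0,y) − p(0|1;x0,y). -/
noncomputable def Qwitness (pc : Fin 2 → Fin 2 → Fin 2 → Fin 2 → ℝ) : ℝ :=
  |(pc 0 0 0 0 - pc 0 1 0 0) * (pc 0 0 1 1 - pc 0 1 1 1) -
    (pc 0 0 1 0 - pc 0 1 1 0) * (pc 0 0 0 1 - pc 0 1 0 1)|

/-- Measurement directions û_0 = x̂, û_1 = ŷ. -/
def dirXY : Fin 2 → Fin 3 → ℝ
  | 0 => ![1, 0, 0]
  | 1 => ![0, 1, 0]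

/-!
The Pauli matrices are trace-orthogonal, `Tr(σᵢσⱼ) = 2δᵢⱼ`, and traceless, so
`Tr((X ⊗ Y) ζ)` only sees the traces of `X`, `Y` and their Pauli components. For Alice's
projector with Bloch vector `s û` and Bob's with `t T` this gives the joint probability
`(1 + s û·a + t T·b + s t Σᵢ cᵢ ûᵢ Tᵢ) / 4` and Alice's marginal `(1 + s û·a) / 2`. Subtracting
the two conditional probabilities for `s = ±1` leaves `(Σᵢ cᵢ ûᵢ Tᵢ − (û·a)(T·b)) / (1 − (û·a)²)`;
for the directions `x̂, ŷ` the off-diagonal entries are `−a₀b₁/(1 − a₀²)` and `−a₁b₀/(1 − a₁²)`.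
-/

theorem trace_pauli (i : Fin 3) : trace (pauli i) = 0 := by
  fin_cases i <;> simp [pauli, trace]

theorem trace_pauli_mul_pauli (i j : Fin 3) :
    trace (pauli i * pauli j) = if i = j then 2 else 0 := by
  fin_cases i <;> fin_cases j <;> simp [pauli, trace] <;> norm_num

theorem trace_blochOp (v : Fin 3 → ℝ) : trace (blochOp v) = 0 := by
  simp [blochOp, trace_sum, trace_pauli]

theorem trace_blochOp_mul_pauli (u : Fin 3 → ℝ) (j : Fin 3) :
    trace (blochOp u * pauli j) = 2 * u j := by
  simp [blochOp, Finset.sum_mul, trace_sum, trace_pauli_mul_pauli, mul_comm]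

theorem trace_blochOp_mul_blochOp (u v : Fin 3 → ℝ) :
    trace (blochOp u * blochOp v) = 2 * (u ⬝ᵥ v : ℝ) := by
  nth_rw 2 [blochOp]
  simp only [Matrix.mul_smul, trace_sum, trace_smul, trace_blochOp_mul_pauli,
    dotProduct, Complex.ofReal_sum, Complex.ofReal_mul, Finset.mul_sum, smul_eq_mul]
  exact Finset.sum_congr rfl fun _ _ => by ring

theorem trace_kronecker_mul_zeta (X Y : Matrix (Fin 2) (Fin 2) ℂ) (a b c : Fin 3 → ℝ) :
    trace ((X ⊗ₖ Y) * zeta a b c) = (trace X * trace Y + trace (X * blochOp a) * trace Y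
      + trace X * trace (Y * blochOp b)
      + ∑ i, c i * (trace (X * pauli i) * trace (Y * pauli i))) / 4 := by
  simp only [zeta, Matrix.mul_smul, Matrix.mul_add, Finset.mul_sum, ← mul_kronecker_mul,
    trace_smul, trace_add, trace_sum, trace_kronecker, Matrix.mul_one, smul_eq_mul]
  ring

section Measurement

variable (u : Fin 2 → Fin 3 → ℝ) (x0 x1 : Fin 2)

theorem trace_measOp_mul (M : Matrix (Fin 2) (Fin 2) ℂ) :
    trace (measOp u x0 x1 * M)
      = (trace M + (-1) ^ (x1 : ℕ) * trace (blochOp (u x0) * M)) / 2 := by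
  simp only [measOp, Matrix.smul_mul, Matrix.add_mul, Matrix.one_mul, trace_smul, trace_add,
    smul_eq_mul]
  ring

theorem trace_measOp : trace (measOp u x0 x1) = 1 := by
  simpa [trace_blochOp] using trace_measOp_mul u x0 x1 1

theorem trace_measOp_mul_blochOp (v : Fin 3 → ℝ) :
    trace (measOp u x0 x1 * blochOp v) = ((-1) ^ (x1 : ℕ) * (u x0 ⬝ᵥ v) : ℝ) := by
  rw [trace_measOp_mul, trace_blochOp, trace_blochOp_mul_blochOp]
  push_cast
  ring

theorem trace_measOp_mul_pauli (i : Fin 3) :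
    trace (measOp u x0 x1 * pauli i) = ((-1) ^ (x1 : ℕ) * u x0 i : ℝ) := by
  rw [trace_measOp_mul, trace_pauli, trace_blochOp_mul_pauli]
  push_cast
  ring

end Measurement

section Probabilities

variable (a b c : Fin 3 → ℝ) (u T : Fin 2 → Fin 3 → ℝ) (x0 x1 y y1 : Fin 2)

theorem trace_measOp_kronecker_measOp_mul_zeta :
    trace ((measOp u x0 x1 ⊗ₖ measOp T y y1) * zeta a b c)
      = ((1 + (-1) ^ (x1 : ℕ) * (u x0 ⬝ᵥ a) + (-1) ^ (y1 : ℕ) * (T y ⬝ᵥ b)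
          + (-1) ^ (x1 : ℕ) * (-1) ^ (y1 : ℕ) * ∑ i, c i * u x0 i * T y i) / 4 : ℝ) := by
  have correlation :
      ∑ i, (c i : ℂ) * (((-1) ^ (x1 : ℕ) * u x0 i : ℝ) * ((-1) ^ (y1 : ℕ) * T y i : ℝ))
      = ((-1) ^ (x1 : ℕ) * (-1) ^ (y1 : ℕ) * ∑ i, c i * u x0 i * T y i : ℝ) := by
    push_cast
    rw [Finset.mul_sum]
    exact Finset.sum_congr rfl fun _ _ => by ring
  rw [trace_kronecker_mul_zeta, trace_measOp, trace_measOp, trace_measOp_mul_blochOp,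
    trace_measOp_mul_blochOp]
  simp only [trace_measOp_mul_pauli, correlation]
  push_cast
  ring

theorem trace_measOp_kronecker_one_mul_zeta :
    trace ((measOp u x0 x1 ⊗ₖ (1 : Matrix (Fin 2) (Fin 2) ℂ)) * zeta a b c)
      = ((1 + (-1) ^ (x1 : ℕ) * (u x0 ⬝ᵥ a)) / 2 : ℝ) := by
  simp only [trace_kronecker_mul_zeta, trace_measOp, trace_measOp_mul_blochOp, trace_one,
    Fintype.card_fin, Matrix.one_mul, trace_blochOp, trace_pauli, mul_zero, Finset.sum_const_zero]
  push_cast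
  ring

theorem pcond_zeta :
    pcond (zeta a b c) u T y1 x1 x0 y
      = (1 + (-1) ^ (x1 : ℕ) * (u x0 ⬝ᵥ a) + (-1) ^ (y1 : ℕ) * (T y ⬝ᵥ b)
          + (-1) ^ (x1 : ℕ) * (-1) ^ (y1 : ℕ) * ∑ i, c i * u x0 i * T y i)
        / (2 * (1 + (-1) ^ (x1 : ℕ) * (u x0 ⬝ᵥ a))) := by
  rw [pcond, trace_measOp_kronecker_measOp_mul_zeta, trace_measOp_kronecker_one_mul_zeta,
    Complex.ofReal_re, Complex.ofReal_re, div_div]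
  congr 1
  ring

theorem pcond_zeta_sub (h : (u x0 ⬝ᵥ a) ^ 2 ≠ 1) :
    pcond (zeta a b c) u T 0 0 x0 y - pcond (zeta a b c) u T 0 1 x0 y
      = (∑ i, c i * u x0 i * T y i - (u x0 ⬝ᵥ a) * (T y ⬝ᵥ b)) / (1 - (u x0 ⬝ᵥ a) ^ 2) := by
  have hp : 1 + (u x0 ⬝ᵥ a) ≠ 0 := fun h' => h (by linear_combination (u x0 ⬝ᵥ a - 1) * h')
  have hm : 1 - (u x0 ⬝ᵥ a) ≠ 0 := fun h' => h (by linear_combination -(u x0 ⬝ᵥ a + 1) * h')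
  simp only [pcond_zeta, Fin.val_zero, Fin.val_one, pow_zero, pow_one, one_mul, neg_one_mul,
    ← sub_eq_add_neg]
  field_simp
  ring

end Probabilities

theorem dirXY_dotProduct (x0 : Fin 2) (v : Fin 3 → ℝ) : dirXY x0 ⬝ᵥ v = v x0.castSucc := by
  fin_cases x0 <;> simp [dirXY, dotProduct, Fin.sum_univ_three]

theorem sum_mul_dirXY_mul_dirXY (c : Fin 3 → ℝ) (x0 y : Fin 2) :
    ∑ i, c i * dirXY x0 i * dirXY y i = if x0 = y then c x0.castSucc else 0 := by
  fin_cases x0 <;> fin_cases y <;> simp [dirXY, Fin.sum_univ_three]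

theorem zeta_witness_formula (a b c : Fin 3 → ℝ)
    (ha1 : |a 0| < 1) (ha2 : |a 1| < 1) :
    Qwitness (pcond (zeta a b c) dirXY dirXY) =
      |(c 0 - a 0 * b 0) * (c 1 - a 1 * b 1) - a 0 * b 0 * a 1 * b 1| /
        ((1 - (a 0) ^ 2) * (1 - (a 1) ^ 2)) := by
  have hD0 : 0 < 1 - a 0 ^ 2 := by nlinarith [abs_lt.mp ha1]
  have hD1 : 0 < 1 - a 1 ^ 2 := by nlinarith [abs_lt.mp ha2]
  have entry (x0 y : Fin 2) (h : 0 < 1 - a x0.castSucc ^ 2) :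
      pcond (zeta a b c) dirXY dirXY 0 0 x0 y - pcond (zeta a b c) dirXY dirXY 0 1 x0 y
        = ((if x0 = y then c x0.castSucc else 0) - a x0.castSucc * b y.castSucc)
          / (1 - a x0.castSucc ^ 2) := by
    rw [pcond_zeta_sub _ _ _ _ _ _ _ (by rw [dirXY_dotProduct]; linarith),
      sum_mul_dirXY_mul_dirXY, dirXY_dotProduct, dirXY_dotProduct]
  rw [Qwitness, entry 0 0 hD0, entry 1 1 hD1, entry 1 0 hD1, entry 0 1 hD0,
    ← abs_of_pos (mul_pos hD0 hD1), ← abs_div]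
  congr 1
  simp only [Fin.isValue, ↓reduceIte, Fin.castSucc_zero, Fin.castSucc_one, one_ne_zero,
    zero_ne_one, zero_sub]
  field_simp
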